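/- arXiv:2506.00093 — 5 statements merged into one kernel-verified Lean document; each statement's English description precedes it below -/
import Mathlib

section
/- Fix an integer m ≥ 1, let T_k = m·k(k-1)/2 + k, h(n) the sequence with h(n)=k iff T_k + 1 ≤ n < T_{k+1} + 1, and a(n) = n - h(n). Then for every k ≥ 0 and every 0 ≤ j ≤ m, the j-th iterate a^{(j)}(T_{k+1}) satisfies h(a^{(j)}(T_{k+1})) = k, and a^{(j)}(T_{k+1}) = T_{k+1} - j·k. -/
/-!
Writing `T = T_{k+1}`, the block on which `h = k` is `(T_k, T]` with `T - T_k = m·k`, so the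
points `T - i·k` for `i ≤ m` all lie in it. Hence each of the first `m` steps of `a` subtracts
exactly `k`, and the orbit of `T` walks down this arithmetic progression.
-/

theorem Function.iterate_eq_sub_mul {a : ℕ → ℕ} {x c N : ℕ}
    (hstep : ∀ i < N, a (x - i * c) = x - i * c - c) :
    ∀ i ≤ N, a^[i] x = x - i * c := by
  intro i hi
  induction i with
  | zero => simp
  | succ i ih =>
    rw [Function.iterate_succ_apply', ih (by omega), hstep i (by omega), Nat.sub_sub,
      add_one_mul]

theorem h_sub_mul_eq (m : ℕ) (h : ℕ → ℕ)
    (hh : ∀ n k : ℕ, 1 ≤ n →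
      (h n = k ↔ ((m * (k * (k - 1) / 2) + k) + 1 ≤ n ∧ n < (m * ((k + 1) * k / 2) + (k + 1)) + 1)))
    {k i : ℕ} (hi : i ≤ m) :
    h ((m * ((k + 1) * k / 2) + (k + 1)) - i * k) = k := by
  have hT : m * ((k + 1) * k / 2) = m * (k * (k - 1) / 2) + m * k := by
    rw [← Nat.mul_add, ← Nat.triangle_succ, Nat.add_sub_cancel]
  have hik : i * k ≤ m * k := Nat.mul_le_mul_right k hi
  rw [hh _ k (by omega)]
  omega

theorem P1_star_general (m : ℕ) (h : ℕ → ℕ)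
    (hh : ∀ n k : ℕ, 1 ≤ n →
      (h n = k ↔ ((m * (k * (k - 1) / 2) + k) + 1 ≤ n ∧ n < (m * ((k + 1) * k / 2) + (k + 1)) + 1)))
    (a : ℕ → ℕ) (ha : ∀ n, a n = n - h n)
    (k j : ℕ) (hj : j ≤ m) :
    h (a^[j] (m * ((k + 1) * k / 2) + (k + 1))) = k ∧
    a^[j] (m * ((k + 1) * k / 2) + (k + 1)) = (m * ((k + 1) * k / 2) + (k + 1)) - j * k := by
  have horbit : a^[j] (m * ((k + 1) * k / 2) + (k + 1)) =
      (m * ((k + 1) * k / 2) + (k + 1)) - j * k :=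
    Function.iterate_eq_sub_mul (fun i hi => by rw [ha, h_sub_mul_eq m h hh hi.le]) j hj
  exact ⟨horbit ▸ h_sub_mul_eq m h hh hj, horbit⟩

/-- Property P1⋆: for `0 ≤ j ≤ m`, `h(a^{(j)}(T_{k+1})) = k` and
`a^{(j)}(T_{k+1}) = T_{k+1} - j·k`, where `T_k = m·k(k-1)/2 + k`. -/
theorem P1_star (m : ℕ) (hm : 1 ≤ m) (h : ℕ → ℕ)
    (hh : ∀ n k : ℕ, 1 ≤ n →
      (h n = k ↔ ((m * (k * (k - 1) / 2) + k) + 1 ≤ n ∧ n < (m * ((k + 1) * k / 2) + (k + 1)) + 1)))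
    (a : ℕ → ℕ) (ha : ∀ n, a n = n - h n)
    (k j : ℕ) (hj : j ≤ m) :
    h (a^[j] (m * ((k + 1) * k / 2) + (k + 1))) = k ∧
    a^[j] (m * ((k + 1) * k / 2) + (k + 1)) = (m * ((k + 1) * k / 2) + (k + 1)) - j * k :=
  P1_star_general m h hh a ha k j hj
end

section
/- Fix an integer m ≥ 1, let T_k = m·k(k-1)/2 + k, h(n) the sequence with h(n)=k iff T_k + 1 ≤ n < T_{k+1} + 1, and a(n) = n - h(n). Then for every k ≥ 0, the m-th iterate satisfies a^{(m)}(T_{k+1}) = T_k + 1. -/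
/-!
The sequence `a` moves down by exactly `k` at every point of the `k`-th block
`[T_k + 1, T_{k+1}]`, and this block has length `T_{k+1} - T_k = m k`. Starting from its
right end, `m` steps of `a` therefore stay inside the block and land on `T_{k+1} - m k = T_k + 1`.
-/

theorem mul_triangle_succ_add (m k : ℕ) :
    m * ((k + 1) * k / 2) + (k + 1) = m * (k * (k - 1) / 2) + k + 1 + m * k := by
  have htri : (k + 1) * k / 2 = k * (k - 1) / 2 + k := by
    have := Nat.choose_succ_succ' k 1
    rw [Nat.choose_one_right, Nat.choose_two_right, Nat.choose_two_right, Nat.add_sub_cancel]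
      at this
    rw [this, add_comm]
  rw [htri]
  ring

theorem iterate_eq_add_sub_mul_of_eq_sub {a : ℕ → ℕ} {b c n : ℕ}
    (hsub : ∀ x, b ≤ x → x ≤ b + n * c → a x = x - c) {j : ℕ} (hj : j ≤ n) :
    a^[j] (b + n * c) = b + (n - j) * c := by
  induction j with
  | zero => simp
  | succ j ih =>
    have hle : (n - j) * c ≤ n * c := Nat.mul_le_mul_right c (Nat.sub_le n j)
    have hstep : n - j = n - (j + 1) + 1 := by omega
    rw [Function.iterate_succ_apply', ih (by omega), hsub _ (by omega) (by omega), hstep,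
      Nat.succ_mul]
    omega

theorem iterate_m_at_block_end_general (m : ℕ) (h : ℕ → ℕ)
    (hh : ∀ n k : ℕ, 1 ≤ n →
      (h n = k ↔ ((m * (k * (k - 1) / 2) + k) + 1 ≤ n ∧ n < (m * ((k + 1) * k / 2) + (k + 1)) + 1)))
    (a : ℕ → ℕ) (ha : ∀ n, a n = n - h n)
    (k : ℕ) :
    a^[m] (m * ((k + 1) * k / 2) + (k + 1)) = (m * (k * (k - 1) / 2) + k) + 1 := by
  have hblock : ∀ x, m * (k * (k - 1) / 2) + k + 1 ≤ x →
      x ≤ m * (k * (k - 1) / 2) + k + 1 + m * k → a x = x - k := by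
    intro x hlo hhi
    rw [ha, (hh x k (by omega)).2 ⟨hlo, by rw [mul_triangle_succ_add]; omega⟩]
  rw [mul_triangle_succ_add, iterate_eq_add_sub_mul_of_eq_sub hblock le_rfl, Nat.sub_self,
    zero_mul, add_zero]

/-- `a^{(m)}(T_{k+1}) = T_k + 1`, where `T_k = m·k(k-1)/2 + k`. -/
theorem iterate_m_at_block_end (m : ℕ) (hm : 1 ≤ m) (h : ℕ → ℕ)
    (hh : ∀ n k : ℕ, 1 ≤ n →
      (h n = k ↔ ((m * (k * (k - 1) / 2) + k) + 1 ≤ n ∧ n < (m * ((k + 1) * k / 2) + (k + 1)) + 1)))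
    (a : ℕ → ℕ) (ha : ∀ n, a n = n - h n)
    (k : ℕ) :
    a^[m] (m * ((k + 1) * k / 2) + (k + 1)) = (m * (k * (k - 1) / 2) + k) + 1 :=
  iterate_m_at_block_end_general m h hh a ha k
end

section
/- Fix an integer m ≥ 1, let T_k = m·k(k-1)/2 + k, h(n) the sequence with h(n)=k iff T_k + 1 ≤ n < T_{k+1} + 1, and a(n) = n - h(n). Then for every k ≥ 1 and every 1 ≤ j ≤ m, h(a^{(j)}(T_k + 1)) = k - 1. -/
/-!
With `T_k = blockOffset m k = m·k(k-1)/2 + k`, `h = k` exactly on the block `(T_k, T_{k+1}]`,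
which has `T_{k+1} - T_k = m·k + 1` elements. Starting at `T_{k+1} + 1`, the first step of `a`
subtracts `k + 1` and lands at `T_k + 1 + (m-1)·k`, inside block `k`; every further step
subtracts `k`, and `m - 1` such steps never leave the block.
-/

def blockOffset (m k : ℕ) : ℕ := m * (k * (k - 1) / 2) + k

theorem blockOffset_succ (m k : ℕ) : blockOffset m (k + 1) = blockOffset m k + m * k + 1 := by
  simp only [blockOffset, ← Nat.choose_two_right, Nat.choose_succ_succ', Nat.choose_one_right]
  ring

section

variable {h a : ℕ → ℕ}

theorem eq_of_mem_block {m : ℕ}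
    (hh : ∀ n k : ℕ, 1 ≤ n →
      (h n = k ↔ ((m * (k * (k - 1) / 2) + k) + 1 ≤ n ∧ n < (m * ((k + 1) * k / 2) + (k + 1)) + 1)))
    {n k : ℕ} (hlo : blockOffset m k < n) (hhi : n ≤ blockOffset m (k + 1)) : h n = k :=
  (hh n k (by omega)).2 ⟨hlo, Nat.lt_succ_of_le hhi⟩

theorem iterate_add_mul_of_forall_eq (ha : ∀ n, a n = n - h n) {b c r : ℕ} :
    ∀ i, (∀ t, r < t → t ≤ r + i → h (b + t * c) = c) → a^[i] (b + (r + i) * c) = b + r * c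
  | 0, _ => rfl
  | i + 1, hc => by
    have hstep : a (b + (r + i + 1) * c) = b + (r + i) * c := by
      rw [ha, hc (r + i + 1) (by omega) (by omega), add_one_mul]
      omega
    rw [Function.iterate_succ_apply, ← add_assoc, hstep]
    exact iterate_add_mul_of_forall_eq ha i fun t hrt hti => hc t hrt (by omega)

end

theorem P2_star_general (m : ℕ) (h : ℕ → ℕ)
    (hh : ∀ n k : ℕ, 1 ≤ n →
      (h n = k ↔ ((m * (k * (k - 1) / 2) + k) + 1 ≤ n ∧ n < (m * ((k + 1) * k / 2) + (k + 1)) + 1)))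
    (a : ℕ → ℕ) (ha : ∀ n, a n = n - h n)
    (k j : ℕ) (hk : 1 ≤ k) (hj1 : 1 ≤ j) (hjm : j ≤ m) :
    h (a^[j] ((m * (k * (k - 1) / 2) + k) + 1)) = k - 1 := by
  obtain ⟨k, rfl⟩ : ∃ k', k = k' + 1 := ⟨k - 1, by omega⟩
  obtain ⟨j, rfl⟩ : ∃ j', j = j' + 1 := ⟨j - 1, by omega⟩
  obtain ⟨r, hr⟩ : ∃ r, m = r + j + 1 := ⟨m - j - 1, by omega⟩
  show h (a^[j + 1] (blockOffset m (k + 1) + 1)) = k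
  have hfirst : h (blockOffset m (k + 1) + 1) = k + 1 :=
    eq_of_mem_block hh (by omega) (by rw [blockOffset_succ m (k + 1)]; omega)
  have hstart : a (blockOffset m (k + 1) + 1) = blockOffset m k + 1 + (r + j) * k := by
    rw [ha, hfirst, blockOffset_succ, hr, add_one_mul]
    omega
  have hblock : ∀ t ≤ m, h (blockOffset m k + 1 + t * k) = k := fun t ht =>
    eq_of_mem_block hh (by omega)
      (by rw [blockOffset_succ]; have := Nat.mul_le_mul_right k ht; omega)
  rw [Function.iterate_succ_apply, hstart,
    iterate_add_mul_of_forall_eq ha j fun t _ ht => hblock t (by omega)]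
  exact hblock r (by omega)

/-- Property P2⋆: for `k ≥ 1` and `1 ≤ j ≤ m`, `h(a^{(j)}(T_k + 1)) = k - 1`. -/
theorem P2_star (m : ℕ) (hm : 1 ≤ m) (h : ℕ → ℕ)
    (hh : ∀ n k : ℕ, 1 ≤ n →
      (h n = k ↔ ((m * (k * (k - 1) / 2) + k) + 1 ≤ n ∧ n < (m * ((k + 1) * k / 2) + (k + 1)) + 1)))
    (a : ℕ → ℕ) (ha : ∀ n, a n = n - h n)
    (k j : ℕ) (hk : 1 ≤ k) (hj1 : 1 ≤ j) (hjm : j ≤ m) :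
    h (a^[j] ((m * (k * (k - 1) / 2) + k) + 1)) = k - 1 :=
  P2_star_general m h hh a ha k j hk hj1 hjm
end

section
/- Fix an integer m ≥ 1, let T_k = m·k(k-1)/2 + k, h(n) the sequence with h(n)=k iff T_k + 1 ≤ n < T_{k+1} + 1, and a(n) = n - h(n). Then for every k ≥ 1, a^{(m)}(T_k + 1) = T_{k-1} + 1. -/
/-!
The blocks of `h` are the intervals `[T_j + 1, T_{j+1} + 1)`, of length `m j + 1`, on which `a`
subtracts `j`. Starting from `T_k + 1`, the first step of `a` subtracts `k` and lands
`(m - 1)(k - 1)` places above `T_{k-1} + 1`, inside block `k - 1`; the remaining `m - 1` steps each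
subtract `k - 1` and stay inside that block, ending exactly at `T_{k-1} + 1`.
-/

/-- The paper's `T_k + 1`, the first index of the `k`-th block of `h`. -/
def blockStart (m k : ℕ) : ℕ := m * (k * (k - 1) / 2) + k + 1

theorem blockStart_succ (m k : ℕ) : blockStart m (k + 1) = blockStart m k + m * k + 1 := by
  have hchoose : (k + 1) * k / 2 = k * (k - 1) / 2 + k := by
    simpa [Nat.choose_two_right, add_comm] using Nat.choose_succ_succ' k 1
  simp only [blockStart, Nat.add_sub_cancel, hchoose]
  ring

theorem iterate_add_mul_eq_of_step {a : ℕ → ℕ} {x c j : ℕ}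
    (hstep : ∀ i < j, a (x + (i + 1) * c) = x + i * c) : a^[j] (x + j * c) = x := by
  induction j with
  | zero => simp
  | succ j ih =>
    rw [Function.iterate_succ_apply, hstep j j.lt_succ_self]
    exact ih fun i hi => hstep i (hi.trans j.lt_succ_self)

/-- For `k ≥ 1`, `a^{(m)}(T_k + 1) = T_{k-1} + 1`, where `T_k = m·k(k-1)/2 + k`. -/
theorem iterate_m_at_block_start (m : ℕ) (hm : 1 ≤ m) (h : ℕ → ℕ)
    (hh : ∀ n k : ℕ, 1 ≤ n →
      (h n = k ↔ ((m * (k * (k - 1) / 2) + k) + 1 ≤ n ∧ n < (m * ((k + 1) * k / 2) + (k + 1)) + 1)))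
    (a : ℕ → ℕ) (ha : ∀ n, a n = n - h n)
    (k : ℕ) (hk : 1 ≤ k) :
    a^[m] ((m * (k * (k - 1) / 2) + k) + 1)
      = (m * ((k - 1) * (k - 1 - 1) / 2) + (k - 1)) + 1 := by
  obtain ⟨k, rfl⟩ : ∃ k', k = k' + 1 := ⟨k - 1, by omega⟩
  obtain ⟨m, rfl⟩ : ∃ m', m = m' + 1 := ⟨m - 1, by omega⟩
  have hblock : ∀ n j, blockStart (m + 1) j ≤ n → n < blockStart (m + 1) (j + 1) → h n = j :=
    fun n j hlo hhi => (hh n j (le_add_self.trans hlo)).2 ⟨hlo, hhi⟩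
  have hnext := blockStart_succ (m + 1) k
  have hfirst : a (blockStart (m + 1) (k + 1)) = blockStart (m + 1) k + m * k := by
    have hend := blockStart_succ (m + 1) (k + 1)
    rw [ha, hblock _ (k + 1) le_rfl (by omega), hnext, add_one_mul]
    omega
  show a^[m + 1] (blockStart (m + 1) (k + 1)) = blockStart (m + 1) k
  rw [Function.iterate_succ_apply, hfirst]
  refine iterate_add_mul_eq_of_step fun i hi => ?_
  have hik : (i + 1) * k ≤ m * k := Nat.mul_le_mul_right k hi
  rw [ha, hblock _ k le_self_add (by rw [hnext, add_one_mul m]; omega), add_one_mul]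
  omega
end

section
/- Fix an integer m ≥ 1 and let S = {m·j(j-1)/2 + j : j ≥ 1}. Define a(1) = 1 and a(n+1) = a(n) + 1 if n ∉ S, a(n+1) = a(n) if n ∈ S, for n ≥ 1. Then a satisfies the nested recurrence a(n+1) = n - a^{(m)}(n) + a^{(m+1)}(n) for all n ≥ 1. -/
/-!
Let `P j = m * (j * (j - 1) / 2) + j`, so that `S = {P j | j ≥ 1}` and `P (j + 1) = P j + m * j + 1`.
Cut `[1, ∞)` into the blocks `(P j, P (j + 1)]`. Since `a` increases by one except at the block
boundaries, `a n = n - j` on the `j`-th block, so `a` shifts that block down by `j`. Iterating,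
`a^[m]` sends `P (j + 1)` to `P j + 1` and `P (j + 2) - 1` to `P (j + 1)`; by monotonicity it maps
`[P (j + 1), P (j + 2))` into block `j`. Hence if `n + 1` lies in block `j + 1`, then
`a (n + 1) = n - j` and `a^[m + 1] n = a^[m] n - j`, which is the recurrence.
-/

def polygonal (m j : ℕ) : ℕ := m * (j * (j - 1) / 2) + j

def polygonalSet (m : ℕ) : Set ℕ := {x | ∃ j, 1 ≤ j ∧ x = polygonal m j}

section Polygonal

variable (m : ℕ)

@[simp]
theorem polygonal_zero : polygonal m 0 = 0 := by
  simp [polygonal]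

theorem polygonal_succ (j : ℕ) : polygonal m (j + 1) = polygonal m j + m * j + 1 := by
  have hdiv : (j + 1) * j / 2 = j * (j - 1) / 2 + j := by
    rcases j with _ | k
    · rfl
    · rw [Nat.add_sub_cancel, show (k + 1 + 1) * (k + 1) = (k + 1) * k + (k + 1) * 2 by ring,
        Nat.add_mul_div_right _ _ two_pos]
  simp only [polygonal, Nat.add_sub_cancel, hdiv]
  ring

theorem polygonal_strictMono : StrictMono (polygonal m) :=
  strictMono_nat_of_lt_succ fun j => by rw [polygonal_succ]; omega

variable {m}

theorem exists_polygonal_lt_le {n : ℕ} (hn : 0 < n) :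
    ∃ j, polygonal m j < n ∧ n ≤ polygonal m (j + 1) := by
  induction n with
  | zero => omega
  | succ n ih =>
    rcases Nat.eq_zero_or_pos n with rfl | hn
    · exact ⟨0, by simp [polygonal]⟩
    obtain ⟨j, hlt, hle⟩ := ih hn
    rcases hle.lt_or_eq with hlt' | rfl
    · exact ⟨j, by omega, hlt'⟩
    · exact ⟨j + 1, by omega, by rw [polygonal_succ m (j + 1)]; omega⟩

theorem polygonal_mem_polygonalSet {j : ℕ} (hj : 1 ≤ j) : polygonal m j ∈ polygonalSet m :=
  ⟨j, hj, rfl⟩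

theorem not_mem_polygonalSet_of_lt_of_lt {j n : ℕ} (hlt : polygonal m j < n)
    (hlt' : n < polygonal m (j + 1)) : n ∉ polygonalSet m := by
  rintro ⟨i, -, rfl⟩
  have hji := (polygonal_strictMono m).lt_iff_lt.mp hlt
  have hij := (polygonal_strictMono m).lt_iff_lt.mp hlt'
  omega

end Polygonal

def IsSlowSeq (S : Set ℕ) (a : ℕ → ℕ) : Prop :=
  a 1 = 1 ∧ ∀ n, 1 ≤ n → (n ∈ S → a (n + 1) = a n) ∧ (n ∉ S → a (n + 1) = a n + 1)

namespace IsSlowSeq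

variable {S : Set ℕ} {a : ℕ → ℕ}

theorem apply_le_apply_succ (h : IsSlowSeq S a) {n : ℕ} (hn : 1 ≤ n) : a n ≤ a (n + 1) := by
  by_cases hS : n ∈ S
  · exact ((h.2 n hn).1 hS).ge
  · rw [(h.2 n hn).2 hS]
    exact Nat.le_succ _

theorem apply_le_apply (h : IsSlowSeq S a) {x y : ℕ} (hx : 1 ≤ x) (hxy : x ≤ y) : a x ≤ a y := by
  induction y, hxy using Nat.le_induction with
  | base => exact le_rfl
  | succ y hxy ih => exact ih.trans (h.apply_le_apply_succ (hx.trans hxy))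

theorem one_le_apply (h : IsSlowSeq S a) {n : ℕ} (hn : 1 ≤ n) : 1 ≤ a n :=
  h.1 ▸ h.apply_le_apply le_rfl hn

theorem iterate_le_iterate (h : IsSlowSeq S a) (k : ℕ) {x y : ℕ} (hx : 1 ≤ x) (hxy : x ≤ y) :
    a^[k] x ≤ a^[k] y := by
  induction k generalizing x y with
  | zero => exact hxy
  | succ k ih =>
    simp only [Function.iterate_succ_apply]
    exact ih (h.one_le_apply hx) (h.apply_le_apply hx hxy)

variable {m : ℕ}

theorem apply_eq_sub (h : IsSlowSeq (polygonalSet m) a) {j n : ℕ} (hlt : polygonal m j < n)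
    (hle : n ≤ polygonal m (j + 1)) : a n = n - j := by
  have hj : j ≤ polygonal m j := Nat.le_add_left _ _
  induction n generalizing j with
  | zero => omega
  | succ n ih =>
    rcases Nat.eq_zero_or_pos n with rfl | hn
    · obtain rfl : j = 0 := by omega
      exact h.1
    rcases (Nat.lt_succ_iff.mp hlt).lt_or_eq with hlt' | rfl
    · rw [(h.2 _ hn).2 (not_mem_polygonalSet_of_lt_of_lt hlt' (by omega)), ih hlt' (by omega) hj]
      omega
    · obtain ⟨i, rfl⟩ : ∃ i, j = i + 1 := Nat.exists_eq_succ_of_ne_zero (by rintro rfl; simp at hn)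
      have hsucc := polygonal_succ m i
      rw [(h.2 _ hn).1 (polygonal_mem_polygonalSet (Nat.le_add_left 1 i)),
        ih (j := i) (by omega) le_rfl (Nat.le_add_left _ _)]
      omega

-- `hk` says that `n - (k - 1) * j`, the last point moved, still lies above `polygonal m j`.
theorem iterate_eq_sub (h : IsSlowSeq (polygonalSet m) a) {j k n : ℕ}
    (hk : polygonal m j + k * j < n + j) (hn : n ≤ polygonal m (j + 1)) :
    a^[k] n = n - k * j := by
  induction k generalizing n with
  | zero => simp
  | succ k ih =>
    rw [add_mul, one_mul] at hk
    rw [Function.iterate_succ_apply, h.apply_eq_sub (by omega) hn, ih (by omega) (by omega)]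
    rw [add_mul, one_mul, Nat.sub_sub, add_comm j]

theorem iterate_mem_block (h : IsSlowSeq (polygonalSet m) a) {i n : ℕ}
    (hlt : polygonal m (i + 1) < n + 1) (hle : n + 1 ≤ polygonal m (i + 1 + 1)) :
    polygonal m i < a^[m] n ∧ a^[m] n ≤ polygonal m (i + 1) := by
  have hsucc := polygonal_succ m i
  have hsucc' := polygonal_succ m (i + 1)
  have hlow : a^[m] (polygonal m (i + 1)) = polygonal m i + 1 := by
    rw [h.iterate_eq_sub (by omega) le_rfl]
    omega
  have hhigh : a^[m] (polygonal m (i + 1 + 1) - 1) = polygonal m (i + 1) := by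
    rw [h.iterate_eq_sub (j := i + 1) (by omega) (by omega)]
    omega
  have hmono_low := h.iterate_le_iterate m (x := polygonal m (i + 1)) (y := n) (by omega) (by omega)
  have hmono_high := h.iterate_le_iterate m (x := n) (y := polygonal m (i + 1 + 1) - 1)
    (by omega) (by omega)
  omega

end IsSlowSeq

theorem conditional_satisfies_recurrence_general (m : ℕ)
    (S : Set ℕ) (hS : S = {x | ∃ j : ℕ, 1 ≤ j ∧ x = m * (j * (j - 1) / 2) + j})
    (a : ℕ → ℕ) (ha1 : a 1 = 1)
    (hstep : ∀ n : ℕ, 1 ≤ n →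
      ((n ∈ S → a (n + 1) = a n) ∧ (n ∉ S → a (n + 1) = a n + 1))) :
    ∀ n : ℕ, 1 ≤ n → (a (n + 1) : ℤ) = n - a^[m] n + a^[m + 1] n := by
  subst hS
  have ha : IsSlowSeq (polygonalSet m) a := ⟨ha1, hstep⟩
  intro n hn
  obtain ⟨j, hlt, hle⟩ := exists_polygonal_lt_le (m := m) (Nat.succ_pos n)
  obtain ⟨i, rfl⟩ : ∃ i, j = i + 1 := Nat.exists_eq_succ_of_ne_zero <| by
    rintro rfl
    simp [polygonal] at hle
    omega
  obtain ⟨hlow, hhigh⟩ := ha.iterate_mem_block hlt hle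
  have hi : i ≤ polygonal m i := Nat.le_add_left _ _
  rw [Function.iterate_succ_apply', ha.apply_eq_sub hlow hhigh, ha.apply_eq_sub hlt hle]
  omega

/-- The conditionally defined slow sequence (increment off `S`) satisfies the
nested recurrence `a(n+1) = n - a^{(m)}(n) + a^{(m+1)}(n)`. -/
theorem conditional_satisfies_recurrence (m : ℕ) (hm : 1 ≤ m)
    (S : Set ℕ) (hS : S = {x | ∃ j : ℕ, 1 ≤ j ∧ x = m * (j * (j - 1) / 2) + j})
    (a : ℕ → ℕ) (ha1 : a 1 = 1)
    (hstep : ∀ n : ℕ, 1 ≤ n →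
      ((n ∈ S → a (n + 1) = a n) ∧ (n ∉ S → a (n + 1) = a n + 1))) :
    ∀ n : ℕ, 1 ≤ n → (a (n + 1) : ℤ) = n - a^[m] n + a^[m + 1] n :=
  conditional_satisfies_recurrence_general m S hS a ha1 hstep
end
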